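/- Inserting an edge between two unsaturated endpoints simply adds the edge to the matching (Lemma 5 of the paper): let M be a stable b-matching of G and let e = {u,v} be an unordered pair of distinct vertices with e ∉ E. If both u and v are unsaturated in M, then M ∪ {e} is a stable b-matching of the graph G + e (obtained by adding edge e); hence the stable b-matching of G + e equals M ∪ {e}. -/

import Mathlib

section

variable {V : Type*} [Fintype V] [DecidableEq V]

def bDeg (M : Finset (Sym2 V)) (u : V) : ℕ :=
  (M.filter (fun e => u ∈ e)).card

def Saturated (b : V → ℕ) (M : Finset (Sym2 V)) (u : V) : Prop :=
  bDeg M u = b u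

def IsBMatching (G : SimpleGraph V) (b : V → ℕ) (M : Finset (Sym2 V)) : Prop :=
  (∀ e ∈ M, e ∈ G.edgeSet) ∧ ∀ u : V, bDeg M u ≤ b u

/-- The termination condition of the b-suitor algorithm. -/
def IsStable (G : SimpleGraph V) (b : V → ℕ) (prec : Sym2 V → Sym2 V → Prop)
    (M : Finset (Sym2 V)) : Prop :=
  IsBMatching G b M ∧
    ∀ e ∈ G.edgeSet, e ∉ M →
      ∃ x ∈ e, Saturated b M x ∧ ∀ f ∈ M, x ∈ f → prec e f

end

open SimpleGraph

section

variable {V : Type*}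

theorem mem_edgeSet_sup_fromEdgeSet_singleton {G : SimpleGraph V} {d e : Sym2 V} :
    e ∈ (G ⊔ fromEdgeSet {d}).edgeSet ↔ e ∈ G.edgeSet ∨ (e = d ∧ ¬ d.IsDiag) := by
  simp only [edgeSet_sup, edgeSet_fromEdgeSet, Set.mem_union, Set.mem_sdiff,
    Set.mem_singleton_iff]
  constructor
  · rintro (h | ⟨rfl, h⟩) <;> simp_all
  · rintro (h | ⟨rfl, h⟩) <;> simp_all

variable [DecidableEq V]

theorem bDeg_insert {M : Finset (Sym2 V)} {e : Sym2 V} (he : e ∉ M) (w : V) :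
    bDeg (insert e M) w = bDeg M w + if w ∈ e then 1 else 0 := by
  unfold bDeg
  rw [Finset.filter_insert]
  split_ifs with hw
  · exact Finset.card_insert_of_notMem (by simp [he])
  · rfl

theorem saturated_insert_of_notMem {b : V → ℕ} {M : Finset (Sym2 V)} {e : Sym2 V}
    (he : e ∉ M) {w : V} (hw : w ∉ e) : Saturated b (insert e M) w ↔ Saturated b M w := by
  simp only [Saturated, bDeg_insert he, if_neg hw, add_zero]

section InsertEdge

variable {G : SimpleGraph V} {b : V → ℕ} {M : Finset (Sym2 V)} {u v : V}

theorem IsBMatching.insert_edge (hM : IsBMatching G b M) (huv : u ≠ v) (huvM : s(u, v) ∉ M)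
    (hu : ¬ Saturated b M u) (hv : ¬ Saturated b M v) :
    IsBMatching (G ⊔ fromEdgeSet {s(u, v)}) b (insert s(u, v) M) := by
  refine ⟨fun e he => ?_, fun w => ?_⟩
  · rw [mem_edgeSet_sup_fromEdgeSet_singleton]
    rcases Finset.mem_insert.mp he with rfl | he
    · exact Or.inr ⟨rfl, by simpa using huv⟩
    · exact Or.inl (hM.1 e he)
  · rw [bDeg_insert huvM]
    split_ifs with hw
    · have hw' : ¬ Saturated b M w := by
        rcases Sym2.mem_iff.mp hw with rfl | rfl <;> assumption
      exact Nat.lt_of_le_of_ne (hM.2 w) hw'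
    · exact hM.2 w

theorem IsStable.insert_edge {prec : Sym2 V → Sym2 V → Prop} (hM : IsStable G b prec M)
    (huv : u ≠ v) (huvM : s(u, v) ∉ M) (hu : ¬ Saturated b M u) (hv : ¬ Saturated b M v) :
    IsStable (G ⊔ fromEdgeSet {s(u, v)}) b prec (insert s(u, v) M) := by
  refine ⟨hM.1.insert_edge huv huvM hu hv, fun e he heM => ?_⟩
  have heG : e ∈ G.edgeSet := by
    rcases mem_edgeSet_sup_fromEdgeSet_singleton.mp he with heG | ⟨rfl, -⟩
    · exact heG
    · exact absurd (Finset.mem_insert_self _ _) heM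
  obtain ⟨x, hxe, hsat, hbeat⟩ := hM.2 e heG (fun h => heM (Finset.mem_insert_of_mem h))
  have hx : x ∉ s(u, v) := by
    rintro hx
    rcases Sym2.mem_iff.mp hx with rfl | rfl
    exacts [hu hsat, hv hsat]
  refine ⟨x, hxe, (saturated_insert_of_notMem huvM hx).mpr hsat, fun f hf hxf => ?_⟩
  rcases Finset.mem_insert.mp hf with rfl | hf
  · exact absurd hxf hx
  · exact hbeat f hf hxf

end InsertEdge

end

variable {V : Type*} [Fintype V] [DecidableEq V]

theorem insert_edge_both_unsaturated_general
    (G : SimpleGraph V) (b : V → ℕ)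
    (prec : Sym2 V → Sym2 V → Prop)
    (u v : V) (huv : u ≠ v) (hnotE : s(u, v) ∉ G.edgeSet)
    (M : Finset (Sym2 V)) (hM : IsStable G b prec M)
    (hu : ¬ Saturated b M u) (hv : ¬ Saturated b M v) :
    IsStable (G ⊔ SimpleGraph.fromEdgeSet {s(u, v)}) b prec (insert s(u, v) M) :=
  hM.insert_edge huv (fun h => hnotE (hM.1.1 _ h)) hu hv

/-- Lemma 5: inserting an edge between two unsaturated endpoints
simply adds the edge to the matching. -/
theorem insert_edge_both_unsaturated
    (G : SimpleGraph V) (ω : Sym2 V → ℝ) (b : V → ℕ)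
    (prec : Sym2 V → Sym2 V → Prop)
    (hω : ∀ e : Sym2 V, ¬ e.IsDiag → 0 < ω e)
    (hirr : ∀ e : Sym2 V, ¬ prec e e)
    (htrans : ∀ e f g : Sym2 V, prec e f → prec f g → prec e g)
    (htotal : ∀ e f : Sym2 V, ¬ e.IsDiag → ¬ f.IsDiag → e ≠ f → prec e f ∨ prec f e)
    (href : ∀ e f : Sym2 V, ¬ e.IsDiag → ¬ f.IsDiag → ω e < ω f → prec e f)
    (u v : V) (huv : u ≠ v) (hnotE : s(u, v) ∉ G.edgeSet)
    (M : Finset (Sym2 V)) (hM : IsStable G b prec M)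
    (hu : ¬ Saturated b M u) (hv : ¬ Saturated b M v) :
    IsStable (G ⊔ SimpleGraph.fromEdgeSet {s(u, v)}) b prec (insert s(u, v) M) :=
  insert_edge_both_unsaturated_general G b prec u v huv hnotE M hM hu hv
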